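/- arXiv:2306.16051 — 4 statements merged into one kernel-verified Lean document; each statement's English description precedes it below -/
import Mathlib

section
/- Let f, g : [0,∞) → ℝ be locally integrable functions. Then for all t ≥ 0, |exp(∫₀ᵗ f(s) ds) − exp(∫₀ᵗ g(s) ds)| ≤ ∫₀ᵗ exp(∫₀ˢ f(u) du) · |f(s) − g(s)| · exp(∫ₛᵗ g(u) du) ds. -/
open MeasureTheory intervalIntegral Real

lemma exp_abs_sub_le' {x y c : ℝ} (hx : x ≤ c) (hy : y ≤ c) :
    |Real.exp x - Real.exp y| ≤ Real.exp c * |x - y| := by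
  wlog h : y ≤ x generalizing x y
  · rw [abs_sub_comm, abs_sub_comm x y]; exact this hy hx (le_of_not_ge h)
  rw [abs_of_nonneg (sub_nonneg.2 (Real.exp_le_exp.2 h)), abs_of_nonneg (sub_nonneg.2 h)]
  have e1 : Real.exp y = Real.exp x * Real.exp (y - x) := by
    rw [← Real.exp_add]; ring_nf
  have e2 := Real.add_one_le_exp (y - x)
  have e3 : Real.exp x ≤ Real.exp c := Real.exp_le_exp.2 hx
  nlinarith [Real.exp_pos x, Real.exp_pos c]

lemma key_cont (ψ : ℝ → ℝ) (hψ : Continuous ψ) (t : ℝ) :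
    (∫ s in (0:ℝ)..t, ψ s * Real.exp (∫ u in (0:ℝ)..s, ψ u))
      = Real.exp (∫ u in (0:ℝ)..t, ψ u) - 1 := by
  have hF : Continuous fun s => ∫ u in (0:ℝ)..s, ψ u :=
    intervalIntegral.continuous_primitive (fun a b => hψ.intervalIntegrable a b) 0
  have hderiv : ∀ s ∈ Set.uIcc (0:ℝ) t,
      HasDerivAt (fun x => Real.exp (∫ u in (0:ℝ)..x, ψ u))
        (ψ s * Real.exp (∫ u in (0:ℝ)..s, ψ u)) s := by
    intro s _
    have h1 : HasDerivAt (fun x => ∫ u in (0:ℝ)..x, ψ u) (ψ s) s :=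
      intervalIntegral.integral_hasDerivAt_right (hψ.intervalIntegrable 0 s)
        (hψ.stronglyMeasurable.stronglyMeasurableAtFilter) hψ.continuousAt
    simpa [mul_comm] using h1.exp
  have hint : IntervalIntegrable
      (fun s => ψ s * Real.exp (∫ u in (0:ℝ)..s, ψ u)) volume 0 t :=
    (hψ.mul (Real.continuous_exp.comp hF)).intervalIntegrable 0 t
  have := intervalIntegral.integral_eq_sub_of_hasDerivAt hderiv hint
  simpa using this


lemma key_eq (φ : ℝ → ℝ) (hφ : Integrable φ) (t : ℝ) (ht : 0 ≤ t) :
    (∫ s in (0:ℝ)..t, φ s * Real.exp (∫ u in (0:ℝ)..s, φ u))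
      = Real.exp (∫ u in (0:ℝ)..t, φ u) - 1 := by
  have habsI : ∀ (ρ : ℝ → ℝ), Integrable ρ → ∀ s : ℝ, 0 ≤ s →
      (∫ u in (0:ℝ)..s, |ρ u|) ≤ ∫ x, |ρ x| := by
    intro ρ hρ s hs
    rw [intervalIntegral.integral_of_le hs]
    exact setIntegral_le_integral hρ.abs (ae_of_all _ fun x => abs_nonneg _)
  have habs : ∀ (ρ : ℝ → ℝ), Integrable ρ → ∀ s : ℝ, 0 ≤ s →
      |∫ u in (0:ℝ)..s, ρ u| ≤ ∫ x, |ρ x| :=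
    fun ρ hρ s hs => (intervalIntegral.abs_integral_le_integral_abs hs).trans (habsI ρ hρ s hs)
  set M : ℝ := ∫ x, |φ x| with hMdef
  have hM0 : 0 ≤ M := integral_nonneg fun x => abs_nonneg _
  set D : ℝ := (∫ s in (0:ℝ)..t, φ s * Real.exp (∫ u in (0:ℝ)..s, φ u))
      - (Real.exp (∫ u in (0:ℝ)..t, φ u) - 1) with hDdef
  set C : ℝ := (2 + M) * Real.exp (M + 1) with hCdef
  have hC : 0 < C := by positivity
  suffices hD : ∀ ε : ℝ, 0 < ε → ε ≤ 1 → |D| ≤ C * ε by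
    have h0 : |D| ≤ 0 := by
      refine le_of_forall_pos_le_add (fun ε hε => ?_)
      have hm : 0 < min 1 (ε / C) := lt_min one_pos (div_pos hε hC)
      have := hD _ hm (min_le_left _ _)
      have h2 : C * min 1 (ε / C) ≤ C * (ε / C) :=
        mul_le_mul_of_nonneg_left (min_le_right _ _) hC.le
      rw [mul_div_cancel₀ _ hC.ne'] at h2
      linarith
    have : D = 0 := abs_eq_zero.1 (le_antisymm h0 (abs_nonneg _))
    linarith [this, hDdef]
  intro ε hε hε1
  obtain ⟨ψ, -, hψL1, hψc, hψint⟩ := hφ.exists_hasCompactSupport_integral_sub_le hε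
  simp only [Real.norm_eq_abs] at hψL1
  set w : ℝ → ℝ := fun s => ∫ u in (0:ℝ)..s, φ u with hwdef
  set v : ℝ → ℝ := fun s => ∫ u in (0:ℝ)..s, ψ u with hvdef
  have hsub : Integrable (fun x => φ x - ψ x) := hφ.sub hψint
  have hvw : ∀ s ∈ Set.Icc (0:ℝ) t, |w s - v s| ≤ ε := by
    intro s hs
    have h1 : w s - v s = ∫ u in (0:ℝ)..s, (φ u - ψ u) :=
      (intervalIntegral.integral_sub (hφ.intervalIntegrable)
        (hψint.intervalIntegrable)).symm
    rw [h1]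
    exact (habs _ hsub s hs.1).trans hψL1
  have hwM : ∀ s ∈ Set.Icc (0:ℝ) t, |w s| ≤ M := fun s hs => habs φ hφ s hs.1
  have hvM : ∀ s ∈ Set.Icc (0:ℝ) t, v s ≤ M + ε := by
    intro s hs
    have := abs_sub_abs_le_abs_sub (v s) (w s)
    have h2 := hvw s hs
    rw [abs_sub_comm] at h2
    have := hwM s hs
    calc v s ≤ |v s| := le_abs_self _
      _ ≤ M + ε := by linarith [abs_sub_abs_le_abs_sub (v s) (w s), hwM s hs]
  have hcw : Continuous w :=
    intervalIntegral.continuous_primitive (fun a b => hφ.intervalIntegrable) 0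
  have hcv : Continuous v :=
    intervalIntegral.continuous_primitive (fun a b => hψint.intervalIntegrable) 0
  have hI1 : IntervalIntegrable (fun s => φ s * Real.exp (w s)) volume 0 t :=
    (hφ.intervalIntegrable).mul_continuousOn
      ((Real.continuous_exp.comp hcw).continuousOn)
  have hI2 : IntervalIntegrable (fun s => ψ s * Real.exp (v s)) volume 0 t :=
    (hψc.mul (Real.continuous_exp.comp hcv)).intervalIntegrable 0 t
  have hkc : (∫ s in (0:ℝ)..t, ψ s * Real.exp (v s)) = Real.exp (v t) - 1 :=
    key_cont ψ hψc t
  have hsplit : D = (∫ s in (0:ℝ)..t, (φ s * Real.exp (w s) - ψ s * Real.exp (v s)))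
      + (Real.exp (v t) - Real.exp (w t)) := by
    rw [intervalIntegral.integral_sub hI1 hI2, hkc]
    simp only [hDdef]
    ring
  have htmem : t ∈ Set.Icc (0:ℝ) t := ⟨ht, le_rfl⟩
  have hterm2 : |Real.exp (v t) - Real.exp (w t)| ≤ Real.exp (M + ε) * ε := by
    have h1 : v t ≤ M + ε := hvM t htmem
    have h2 : w t ≤ M + ε := le_trans (le_trans (le_abs_self _) (hwM t htmem)) (by linarith)
    have := exp_abs_sub_le' h1 h2
    have h3 : |v t - w t| ≤ ε := by rw [abs_sub_comm]; exact hvw t htmem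
    calc |Real.exp (v t) - Real.exp (w t)| ≤ Real.exp (M + ε) * |v t - w t| := this
      _ ≤ Real.exp (M + ε) * ε := mul_le_mul_of_nonneg_left h3 (Real.exp_pos _).le
  -- pointwise bound for the integral term
  have hIb1 : IntervalIntegrable (fun s => Real.exp (M + ε) * |φ s - ψ s|) volume 0 t :=
    ((hsub.intervalIntegrable).abs).const_mul _
  have hIb2 : IntervalIntegrable (fun s => (Real.exp (M + ε) * ε) * |φ s|) volume 0 t :=
    ((hφ.intervalIntegrable).abs).const_mul _
  have hmono : (∫ s in (0:ℝ)..t, |φ s * Real.exp (w s) - ψ s * Real.exp (v s)|)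
      ≤ ∫ s in (0:ℝ)..t,
        (Real.exp (M + ε) * |φ s - ψ s| + (Real.exp (M + ε) * ε) * |φ s|) := by
    apply intervalIntegral.integral_mono_on ht ((hI1.sub hI2).abs) (hIb1.add hIb2)
    intro s hs
    have hvs : Real.exp (v s) ≤ Real.exp (M + ε) := Real.exp_le_exp.2 (hvM s hs)
    have hws : w s ≤ M + ε :=
      le_trans (le_trans (le_abs_self _) (hwM s hs)) (by linarith)
    have hexp : |Real.exp (w s) - Real.exp (v s)| ≤ Real.exp (M + ε) * ε := by
      calc |Real.exp (w s) - Real.exp (v s)| ≤ Real.exp (M + ε) * |w s - v s| :=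
            exp_abs_sub_le' hws (hvM s hs)
        _ ≤ Real.exp (M + ε) * ε := mul_le_mul_of_nonneg_left (hvw s hs) (Real.exp_pos _).le
    have hid : φ s * Real.exp (w s) - ψ s * Real.exp (v s)
        = (φ s - ψ s) * Real.exp (v s) + φ s * (Real.exp (w s) - Real.exp (v s)) := by ring
    rw [hid]
    calc |(φ s - ψ s) * Real.exp (v s) + φ s * (Real.exp (w s) - Real.exp (v s))|
        ≤ |(φ s - ψ s) * Real.exp (v s)| + |φ s * (Real.exp (w s) - Real.exp (v s))| :=
          abs_add_le _ _
      _ = |φ s - ψ s| * Real.exp (v s) + |φ s| * |Real.exp (w s) - Real.exp (v s)| := by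
          rw [abs_mul, abs_mul, Real.abs_exp]
      _ ≤ |φ s - ψ s| * Real.exp (M + ε) + |φ s| * (Real.exp (M + ε) * ε) :=
          add_le_add (mul_le_mul_of_nonneg_left hvs (abs_nonneg _))
            (mul_le_mul_of_nonneg_left hexp (abs_nonneg _))
      _ = Real.exp (M + ε) * |φ s - ψ s| + (Real.exp (M + ε) * ε) * |φ s| := by ring
  have hsum : (∫ s in (0:ℝ)..t,
        (Real.exp (M + ε) * |φ s - ψ s| + (Real.exp (M + ε) * ε) * |φ s|))
      ≤ Real.exp (M + ε) * ε + (Real.exp (M + ε) * ε) * M := by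
    rw [intervalIntegral.integral_add hIb1 hIb2, intervalIntegral.integral_const_mul,
      intervalIntegral.integral_const_mul]
    have h1 : (∫ s in (0:ℝ)..t, |φ s - ψ s|) ≤ ε :=
      le_trans (habsI _ hsub t ht) hψL1
    have h2 : (∫ s in (0:ℝ)..t, |φ s|) ≤ M := habsI φ hφ t ht
    have e1 : (0:ℝ) ≤ Real.exp (M + ε) := (Real.exp_pos _).le
    have e2 : (0:ℝ) ≤ Real.exp (M + ε) * ε := by positivity
    nlinarith
  have hterm1 : |∫ s in (0:ℝ)..t, (φ s * Real.exp (w s) - ψ s * Real.exp (v s))|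
      ≤ Real.exp (M + ε) * ε + (Real.exp (M + ε) * ε) * M :=
    le_trans (intervalIntegral.abs_integral_le_integral_abs ht) (le_trans hmono hsum)
  have hexpMe : Real.exp (M + ε) ≤ Real.exp (M + 1) := Real.exp_le_exp.2 (by linarith)
  calc |D| ≤ |∫ s in (0:ℝ)..t, (φ s * Real.exp (w s) - ψ s * Real.exp (v s))|
        + |Real.exp (v t) - Real.exp (w t)| := by rw [hsplit]; exact abs_add_le _ _
    _ ≤ (Real.exp (M + ε) * ε + (Real.exp (M + ε) * ε) * M) + Real.exp (M + ε) * ε :=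
        add_le_add hterm1 hterm2
    _ ≤ C * ε := by
        rw [hCdef]
        nlinarith [mul_le_mul_of_nonneg_right hexpMe
          (mul_nonneg hε.le (by linarith : (0:ℝ) ≤ 2 + M))]


theorem exp_integral_diff_bound (f g : ℝ → ℝ) :
    ∀ t : ℝ, 0 ≤ t →
    IntegrableOn f (Set.Icc 0 t) →
    IntegrableOn g (Set.Icc 0 t) →
    |Real.exp (∫ s in (0:ℝ)..t, f s) - Real.exp (∫ s in (0:ℝ)..t, g s)| ≤
      ∫ s in (0:ℝ)..t,
        Real.exp (∫ u in (0:ℝ)..s, f u) * |f s - g s| * Real.exp (∫ u in s..t, g u) := by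
  intro t ht hf hg
  set φ : ℝ → ℝ := Set.indicator (Set.Icc 0 t) (fun s => f s - g s) with hφdef
  have hφint : Integrable φ := by
    rw [hφdef, integrable_indicator_iff measurableSet_Icc]
    exact hf.sub hg
  set w : ℝ → ℝ := fun s => ∫ u in (0:ℝ)..s, φ u with hwdef
  have hkey : (∫ s in (0:ℝ)..t, φ s * Real.exp (w s)) = Real.exp (w t) - 1 :=
    key_eq φ hφint t ht
  -- interval integrability of f, g on subintervals
  have hfs : ∀ s ∈ Set.Icc (0:ℝ) t, IntervalIntegrable f volume 0 s := by
    intro s hs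
    apply MeasureTheory.IntegrableOn.intervalIntegrable
    rw [Set.uIcc_of_le hs.1]
    exact hf.mono_set (Set.Icc_subset_Icc le_rfl hs.2)
  have hgs : ∀ s ∈ Set.Icc (0:ℝ) t, IntervalIntegrable g volume 0 s := by
    intro s hs
    apply MeasureTheory.IntegrableOn.intervalIntegrable
    rw [Set.uIcc_of_le hs.1]
    exact hg.mono_set (Set.Icc_subset_Icc le_rfl hs.2)
  have hgst : ∀ s ∈ Set.Icc (0:ℝ) t, IntervalIntegrable g volume s t := by
    intro s hs
    apply MeasureTheory.IntegrableOn.intervalIntegrable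
    rw [Set.uIcc_of_le hs.2]
    exact hg.mono_set (Set.Icc_subset_Icc hs.1 le_rfl)
  have hweq : ∀ s ∈ Set.Icc (0:ℝ) t,
      w s = (∫ u in (0:ℝ)..s, f u) - ∫ u in (0:ℝ)..s, g u := by
    intro s hs
    have h1 : w s = ∫ u in (0:ℝ)..s, (f u - g u) := by
      apply intervalIntegral.integral_congr
      intro x hx
      rw [Set.uIcc_of_le hs.1] at hx
      exact Set.indicator_of_mem (Set.Icc_subset_Icc le_rfl hs.2 hx) _
    rw [h1, intervalIntegral.integral_sub (hfs s hs) (hgs s hs)]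
  have htmem : t ∈ Set.Icc (0:ℝ) t := ⟨ht, le_rfl⟩
  set A : ℝ := ∫ s in (0:ℝ)..t, f s with hAdef
  set B : ℝ := ∫ s in (0:ℝ)..t, g s with hBdef
  have hwt : w t = A - B := hweq t htmem
  have hfactor : Real.exp A - Real.exp B = Real.exp B * (Real.exp (w t) - 1) := by
    rw [hwt, mul_sub, mul_one, ← Real.exp_add]
    congr 1
    ring
  have hRHS : (∫ s in (0:ℝ)..t,
        Real.exp (∫ u in (0:ℝ)..s, f u) * |f s - g s| * Real.exp (∫ u in s..t, g u))
      = ∫ s in (0:ℝ)..t, Real.exp B * (|φ s| * Real.exp (w s)) := by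
    apply intervalIntegral.integral_congr
    intro s hs
    rw [Set.uIcc_of_le ht] at hs
    have h1 : (∫ u in s..t, g u) = B - ∫ u in (0:ℝ)..s, g u := by
      rw [eq_sub_iff_add_eq, add_comm]
      exact intervalIntegral.integral_add_adjacent_intervals (hgs s hs) (hgst s hs)
    have h2 : |f s - g s| = |φ s| := by
      rw [hφdef, Set.indicator_of_mem hs]
    beta_reduce
    rw [h2, h1, hweq s hs, Real.exp_sub, Real.exp_sub]
    field_simp
  calc |Real.exp A - Real.exp B| = Real.exp B * |Real.exp (w t) - 1| := by
        rw [hfactor, abs_mul, abs_of_pos (Real.exp_pos B)]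
    _ = Real.exp B * |∫ s in (0:ℝ)..t, φ s * Real.exp (w s)| := by rw [hkey]
    _ ≤ Real.exp B * ∫ s in (0:ℝ)..t, |φ s * Real.exp (w s)| :=
        mul_le_mul_of_nonneg_left (intervalIntegral.abs_integral_le_integral_abs ht)
          (Real.exp_pos B).le
    _ = ∫ s in (0:ℝ)..t, Real.exp B * (|φ s| * Real.exp (w s)) := by
        rw [← intervalIntegral.integral_const_mul]
        apply intervalIntegral.integral_congr
        intro x _
        beta_reduce
        rw [abs_mul, Real.abs_exp]
    _ = _ := hRHS.symm
end

section
/- For the Bernoulli convolution chain X_{n+1} = X_n/2 + θ_{n+1} on [−2,2] with i.i.d. Rademacher (θ_n), started from x, for all n ≥ 1: E_x(|X₁|⋯|X_{n−1}|) = 1 and E_x(X_n |X₁|⋯|X_{n−1}|) = x/2 (with empty products equal to 1). -/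
open MeasureTheory ProbabilityTheory Finset


set_option linter.unusedSectionVars false
namespace BCAux

variable {Ω : Type*} [MeasurableSpace Ω] {μ : Measure Ω} {θ : ℕ → Ω → ℝ}

/-- `f` is a (measurable) function of `θ 0, …, θ n`. -/
def Adapted (θ : ℕ → Ω → ℝ) (n : ℕ) (f : Ω → ℝ) : Prop :=
  ∃ G : ((Finset.range (n+1) : Finset ℕ) → ℝ) → ℝ,
    Measurable G ∧ ∀ ω, f ω = G (fun i => θ i ω)

lemma Adapted.congr {n : ℕ} {f g : Ω → ℝ} (hf : Adapted θ n f) (h : ∀ ω, f ω = g ω) :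
    Adapted θ n g := by
  obtain ⟨F, hF, hFe⟩ := hf
  exact ⟨F, hF, fun ω => (h ω) ▸ hFe ω⟩

lemma Adapted.const (n : ℕ) (c : ℝ) : Adapted θ n (fun _ => c) :=
  ⟨fun _ => c, measurable_const, fun _ => rfl⟩

lemma Adapted.theta {k n : ℕ} (h : k ≤ n) : Adapted θ n (θ k) :=
  ⟨fun v => v ⟨k, by simp only [Finset.mem_range]; omega⟩,
   measurable_pi_apply _, fun ω => rfl⟩

lemma Adapted.add {n : ℕ} {f g : Ω → ℝ} (hf : Adapted θ n f) (hg : Adapted θ n g) :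
    Adapted θ n (fun ω => f ω + g ω) := by
  obtain ⟨F, hF, hFe⟩ := hf; obtain ⟨G, hG, hGe⟩ := hg
  exact ⟨fun v => F v + G v, hF.add hG, fun ω => by dsimp only; rw [hFe, hGe]⟩

lemma Adapted.mul {n : ℕ} {f g : Ω → ℝ} (hf : Adapted θ n f) (hg : Adapted θ n g) :
    Adapted θ n (fun ω => f ω * g ω) := by
  obtain ⟨F, hF, hFe⟩ := hf; obtain ⟨G, hG, hGe⟩ := hg
  exact ⟨fun v => F v * G v, hF.mul hG, fun ω => by dsimp only; rw [hFe, hGe]⟩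

lemma Adapted.abs {n : ℕ} {f : Ω → ℝ} (hf : Adapted θ n f) :
    Adapted θ n (fun ω => |f ω|) := by
  obtain ⟨F, hF, hFe⟩ := hf
  exact ⟨fun v => |F v|, hF.abs, fun ω => by dsimp only; rw [hFe]⟩

lemma Adapted.mono {n m : ℕ} {f : Ω → ℝ} (hf : Adapted θ n f) (hnm : n ≤ m) :
    Adapted θ m f := by
  obtain ⟨F, hF, hFe⟩ := hf
  refine ⟨fun v => F (fun i => v ⟨(i : ℕ), ?_⟩), ?_, fun ω => hFe ω⟩
  · have := i.2; simp only [Finset.mem_range] at this ⊢; omega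
  · exact hF.comp (measurable_pi_lambda _ fun i => measurable_pi_apply _)

lemma Adapted.measurable {n : ℕ} {f : Ω → ℝ} (hθmeas : ∀ k, Measurable (θ k))
    (hf : Adapted θ n f) : Measurable f := by
  obtain ⟨F, hF, hFe⟩ := hf
  have : f = fun ω => F (fun i => θ i ω) := funext hFe
  rw [this]
  exact hF.comp (measurable_pi_lambda _ fun i => hθmeas i)

lemma Adapted.indepFun [IsProbabilityMeasure μ] {n m : ℕ} {f : Ω → ℝ}
    (hθindep : iIndepFun (m := fun _ => Real.measurableSpace) θ μ)
    (hθmeas : ∀ k, Measurable (θ k))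
    (hf : Adapted θ n f) (h : n < m) : IndepFun f (θ m) μ := by
  obtain ⟨G, hG, hGe⟩ := hf
  have hdisj : Disjoint (Finset.range (n+1)) ({m} : Finset ℕ) := by
    simp only [Finset.disjoint_singleton_right, Finset.mem_range]; omega
  have h1 := hθindep.indepFun_finset (Finset.range (n+1)) {m} hdisj hθmeas
  have h2 := h1.comp hG
    (measurable_pi_apply (⟨m, Finset.mem_singleton_self m⟩ : ({m} : Finset ℕ)))
  have : f = fun ω => G (fun i => θ i ω) := funext hGe
  rw [this]
  exact h2

lemma integrable_of_bdd [IsProbabilityMeasure μ] {f : Ω → ℝ} {C : ℝ}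
    (hf : Measurable f) (h : ∀ ω, |f ω| ≤ C) : Integrable f μ := by
  refine (integrable_const C).mono' hf.aestronglyMeasurable ?_
  filter_upwards with ω
  simpa using h ω

lemma integral_theta [IsProbabilityMeasure μ]
    (hθmeas : ∀ k, Measurable (θ k))
    (hθval : ∀ k ω, θ k ω = 1 ∨ θ k ω = -1)
    (hθ1 : ∀ k, μ {ω | θ k ω = 1} = 1/2) (n : ℕ) :
    ∫ ω, θ n ω ∂μ = 0 := by
  set A : Set Ω := {ω | θ n ω = 1} with hA_def
  have hA : MeasurableSet A := (hθmeas n) (measurableSet_singleton (1 : ℝ))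
  have hint : Integrable (θ n) μ := by
    refine integrable_of_bdd (hθmeas n) (C := 1) fun ω => ?_
    rcases hθval n ω with h | h <;> rw [h] <;> norm_num
  have hμA : μ A = 1/2 := hθ1 n
  have hμAc : μ Aᶜ = 1/2 := by
    rw [measure_compl hA (measure_ne_top μ A), hμA, measure_univ]
    refine ENNReal.sub_eq_of_eq_add (by norm_num) ?_
    rw [ENNReal.div_add_div_same, one_add_one_eq_two,
      ENNReal.div_self two_ne_zero ENNReal.ofNat_ne_top]
  have h1 : ∫ ω in A, θ n ω ∂μ = (1 : ℝ) / 2 := by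
    rw [setIntegral_congr_fun hA (g := fun _ => (1 : ℝ)) (fun ω hω => hω)]
    rw [setIntegral_const, measureReal_def, hμA, smul_eq_mul, mul_one]
    simp [ENNReal.toReal_div]
  have h2 : ∫ ω in Aᶜ, θ n ω ∂μ = -(1 : ℝ) / 2 := by
    rw [setIntegral_congr_fun hA.compl (g := fun _ => (-1 : ℝ)) ?_]
    · rw [setIntegral_const, measureReal_def, hμAc, smul_eq_mul, mul_neg_one]
      norm_num [ENNReal.toReal_div]
    · intro ω hω
      rcases hθval n ω with h | h
      · exact absurd h hω
      · exact h
  rw [← integral_add_compl hA hint, h1, h2]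
  ring

lemma integral_theta_mul [IsProbabilityMeasure μ]
    (hθindep : iIndepFun (m := fun _ => Real.measurableSpace) θ μ)
    (hθmeas : ∀ k, Measurable (θ k))
    (hθval : ∀ k ω, θ k ω = 1 ∨ θ k ω = -1)
    (hθ1 : ∀ k, μ {ω | θ k ω = 1} = 1/2)
    {n m : ℕ} {f : Ω → ℝ} (hf : Adapted θ n f) (h : n < m) :
    ∫ ω, θ m ω * f ω ∂μ = 0 := by
  have hind := (hf.indepFun hθindep hθmeas h).symm
  rw [hind.integral_fun_mul_eq_mul_integral (hθmeas m).aestronglyMeasurable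
    (hf.measurable hθmeas).aestronglyMeasurable,
    integral_theta hθmeas hθval hθ1, zero_mul]

end BCAux

open BCAux in
/-- For the Bernoulli convolution chain started at `x`, for all `n ≥ 1`,
`E(|X₁|⋯|X_{n-1}|) = 1` and `E(X_n |X₁|⋯|X_{n-1}|) = x/2`. -/
theorem bernoulli_convolution_penalized_moments
    {Ω : Type*} [MeasurableSpace Ω] (μ : Measure Ω) [IsProbabilityMeasure μ]
    (θ : ℕ → Ω → ℝ) (hθmeas : ∀ n, Measurable (θ n))
    (hθindep : iIndepFun (m := fun _ => Real.measurableSpace) θ μ)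
    (hθval : ∀ n ω, θ n ω = 1 ∨ θ n ω = -1)
    (hθ1 : ∀ n, μ {ω | θ n ω = 1} = 1/2)
    (x : ℝ) (hx : x ∈ Set.Ioo (-2 : ℝ) 2) (hx0 : x ≠ 0)
    (X : ℕ → Ω → ℝ) (hX0 : ∀ ω, X 0 ω = x)
    (hX : ∀ k ω, X (k + 1) ω = X k ω / 2 + θ (k + 1) ω) :
    ∀ n : ℕ, 1 ≤ n →
      (∫ ω, ∏ k ∈ Finset.Icc 1 (n - 1), |X k ω| ∂μ) = 1 ∧
      (∫ ω, X n ω * ∏ k ∈ Finset.Icc 1 (n - 1), |X k ω| ∂μ) = x / 2 := by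
  have hθsq : ∀ k ω, θ k ω * θ k ω = 1 := fun k ω => by
    rcases hθval k ω with h | h <;> rw [h] <;> norm_num
  have hθabs : ∀ k ω, |θ k ω| = 1 := fun k ω => by
    rcases hθval k ω with h | h <;> rw [h] <;> norm_num
  have hXmeas : ∀ k, Measurable (X k) := by
    intro k; induction k with
    | zero =>
      have : X 0 = fun _ => x := funext hX0
      rw [this]; exact measurable_const
    | succ k ih =>
      have : X (k+1) = fun ω => X k ω / 2 + θ (k+1) ω := funext (hX k)
      rw [this]; exact (ih.div_const 2).add (hθmeas (k+1))
  have hXlt : ∀ k ω, |X k ω| < 2 := by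
    intro k; induction k with
    | zero => intro ω; rw [hX0]; exact abs_lt.2 ⟨hx.1, hx.2⟩
    | succ k ih =>
      intro ω
      have h2 := abs_lt.1 (ih ω)
      rcases hθval (k+1) ω with h | h <;> rw [hX k ω, h, abs_lt] <;>
        constructor <;> linarith
  have hXle : ∀ k ω, |X k ω| ≤ 2 := fun k ω => (hXlt k ω).le
  have hsign : ∀ k ω, |X (k+1) ω| = θ (k+1) ω * X (k+1) ω := by
    intro k ω
    have h2 := abs_lt.1 (hXlt k ω)
    have hpos : 0 < θ (k+1) ω * X (k+1) ω := by
      rcases hθval (k+1) ω with h | h <;> rw [hX k ω, h] <;> nlinarith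
    rw [← abs_of_pos hpos, abs_mul, hθabs, one_mul]
  set P : ℕ → Ω → ℝ := fun m ω => ∏ k ∈ Finset.Icc 1 m, |X k ω| with hP
  have hPsucc : ∀ m ω, P (m+1) ω = P m ω * |X (m+1) ω| := fun m ω =>
    Finset.prod_Icc_succ_top (by omega) _
  have hXad : ∀ k, Adapted θ k (X k) := by
    intro k; induction k with
    | zero => exact (Adapted.const 0 x).congr fun ω => (hX0 ω).symm
    | succ k ih =>
      refine (((ih.mono k.le_succ).mul (Adapted.const (k+1) (1/2))).add
        (Adapted.theta le_rfl)).congr fun ω => ?_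
      rw [hX k ω]; ring
  have hPad : ∀ m, Adapted θ m (P m) := by
    intro m; induction m with
    | zero =>
      refine (Adapted.const 0 1).congr fun ω => ?_
      rw [hP]; simp
    | succ m ih =>
      exact ((ih.mono m.le_succ).mul (hXad (m+1)).abs).congr fun ω =>
        (hPsucc m ω).symm
  have hPmeas : ∀ m, Measurable (P m) := fun m => (hPad m).measurable hθmeas
  have hPb : ∀ m ω, |P m ω| ≤ 2^m := by
    intro m; induction m with
    | zero => intro ω; rw [hP]; simp
    | succ m ih =>
      intro ω
      rw [hPsucc m ω, abs_mul, abs_abs, pow_succ]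
      exact mul_le_mul (ih ω) (hXle _ ω) (abs_nonneg _) (by positivity)
  have hbd2 : ∀ j ω, |X j ω * P j ω| ≤ 2 * 2^j := fun j ω => by
    rw [abs_mul]
    exact mul_le_mul (hXle j ω) (hPb j ω) (abs_nonneg _) (by norm_num)
  have hint_P : ∀ j, Integrable (P j) μ := fun j =>
    integrable_of_bdd (hPmeas j) (hPb j)
  have hint_xp : ∀ j, Integrable (fun ω => X j ω * P j ω) μ := fun j =>
    integrable_of_bdd ((hXmeas j).mul (hPmeas j)) (hbd2 j)
  have key : ∀ m, (∫ ω, P m ω ∂μ) = 1 ∧ (∫ ω, X m ω * P m ω ∂μ) = x := by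
    intro m; induction m with
    | zero =>
      constructor
      · have h1 : ∀ ω, P 0 ω = 1 := fun ω => by rw [hP]; simp
        rw [integral_congr_ae (Filter.Eventually.of_forall h1)]
        simp
      · have h1 : ∀ ω, X 0 ω * P 0 ω = x := fun ω => by rw [hP, hX0]; simp
        rw [integral_congr_ae (Filter.Eventually.of_forall h1)]
        simp
    | succ m ih =>
      obtain ⟨ih1, ih2⟩ := ih
      have hid1 : ∀ ω, P (m+1) ω = P m ω + θ (m+1) ω * (P m ω * X m ω / 2) := by
        intro ω
        rw [hPsucc m ω, hsign m ω, hX m ω]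
        linear_combination (P m ω) * hθsq (m+1) ω
      have hid2 : ∀ ω, X (m+1) ω * P (m+1) ω
          = θ (m+1) ω * ((X m ω ^ 2 / 4 + 1) * P m ω) + X m ω * P m ω := by
        intro ω
        rw [hPsucc m ω, hsign m ω, hX m ω]
        linear_combination ((X m ω + θ (m+1) ω) * P m ω) * hθsq (m+1) ω
      have hint_g : Integrable (fun ω => θ (m+1) ω * (P m ω * X m ω / 2)) μ := by
        refine integrable_of_bdd (C := 2^m * 2 / 2)
          ((hθmeas (m+1)).mul (((hPmeas m).mul (hXmeas m)).div_const 2)) fun ω => ?_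
        have h := mul_le_mul (hPb m ω) (hXle m ω) (abs_nonneg _) (by positivity)
        rw [abs_mul, hθabs, one_mul, abs_div, abs_mul, abs_two]
        linarith
      have hint_h : Integrable (fun ω => θ (m+1) ω * ((X m ω ^ 2 / 4 + 1) * P m ω)) μ := by
        refine integrable_of_bdd (C := 2 * 2^m)
          ((hθmeas (m+1)).mul ((((hXmeas m).pow_const 2).div_const 4).add
            measurable_const |>.mul (hPmeas m))) fun ω => ?_
        have h1 := abs_lt.1 (hXlt m ω)
        have h2 := hPb m ω
        have h3 : |X m ω ^ 2 / 4 + 1| ≤ 2 := by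
          rw [abs_le]; constructor <;> nlinarith
        rw [abs_mul, hθabs, one_mul, abs_mul]
        have := mul_le_mul h3 h2 (abs_nonneg _) (by norm_num)
        linarith
      have hz1 : ∫ ω, θ (m+1) ω * (P m ω * X m ω / 2) ∂μ = 0 := by
        refine integral_theta_mul hθindep hθmeas hθval hθ1
          ((((hPad m).mul (hXad m)).mul (Adapted.const m (1/2))).congr fun ω => ?_)
          (Nat.lt_succ_self m)
        ring
      have hz2 : ∫ ω, θ (m+1) ω * ((X m ω ^ 2 / 4 + 1) * P m ω) ∂μ = 0 := by
        refine integral_theta_mul hθindep hθmeas hθval hθ1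
          (((((hXad m).mul (hXad m)).mul (Adapted.const m (1/4))).add
            (Adapted.const m 1) |>.mul (hPad m)).congr fun ω => ?_)
          (Nat.lt_succ_self m)
        ring
      constructor
      · rw [integral_congr_ae (Filter.Eventually.of_forall hid1),
          integral_add (hint_P m) hint_g, ih1, hz1, add_zero]
      · rw [integral_congr_ae (Filter.Eventually.of_forall hid2),
          integral_add hint_h (hint_xp m), hz2, ih2, zero_add]
  have key2 : ∀ m, (∫ ω, X (m+1) ω * P m ω ∂μ) = x / 2 := by
    intro m
    have hid : ∀ ω, X (m+1) ω * P m ω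
        = X m ω * P m ω * (1/2) + θ (m+1) ω * P m ω := by
      intro ω; rw [hX m ω]; ring
    have hz : ∫ ω, θ (m+1) ω * P m ω ∂μ = 0 :=
      integral_theta_mul hθindep hθmeas hθval hθ1 (hPad m) (Nat.lt_succ_self m)
    have hint_tp : Integrable (fun ω => θ (m+1) ω * P m ω) μ := by
      refine integrable_of_bdd (C := 2^m)
        ((hθmeas (m+1)).mul (hPmeas m)) fun ω => ?_
      rw [abs_mul, hθabs, one_mul]
      exact hPb m ω
    rw [integral_congr_ae (Filter.Eventually.of_forall hid),
      integral_add ((hint_xp m).mul_const (1/2)) hint_tp,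
      integral_mul_const, (key m).2, hz, add_zero]
    ring
  intro n hn
  obtain ⟨m, rfl⟩ : ∃ m, n = m + 1 := ⟨n - 1, (Nat.succ_pred_eq_of_pos hn).symm⟩
  simp only [Nat.add_sub_cancel]
  exact ⟨(key m).1, key2 m⟩
end

section
/- Let X be the Bernoulli convolution chain on E = (−2,2)\{0} with penalization p(x) = |x|/2, i.e. Z_n = p(X₀)⋯p(X_{n−1}) and G_n = Z_n / E_x(Z_n). Then for all x, y ∈ E and all n ≥ 1, the L¹ Wasserstein distance (for the Euclidean distance on ℝ) between the conditional laws δ_x P_n / (δ_x P_n 1) and δ_y P_n / (δ_y P_n 1) is at least |x − y|/2. -/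
open MeasureTheory ProbabilityTheory Finset

/-- Penalty `Z_n = p(X₀)⋯p(X_{n-1})` with `p(x) = |x|/2`. -/
noncomputable def bcPenalty {Ω : Type*} (X : ℕ → Ω → ℝ) (n : ℕ) (ω : Ω) : ℝ :=
  ∏ k ∈ Finset.range n, |X k ω| / 2

/-- The conditional law at time `n`: `f ↦ E[Z_n f(X_n)] / E[Z_n]`, as a measure on `ℝ`. -/
noncomputable def bcCondLaw {Ω : Type*} [MeasurableSpace Ω] (μ : Measure Ω)
    (X : ℕ → Ω → ℝ) (n : ℕ) : Measure ℝ :=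
  Measure.map (X n)
    ((∫⁻ ω, ENNReal.ofReal (bcPenalty X n ω) ∂μ)⁻¹ •
      μ.withDensity (fun ω => ENNReal.ofReal (bcPenalty X n ω)))

/-- auxiliary deterministic recursion -/
noncomputable def bcVec (x : ℝ) : ℕ → (ℕ → ℝ) → ℝ
  | 0, _ => x
  | (k+1), v => bcVec x k v / 2 + v (k+1)

lemma bcVec_measurable (x : ℝ) (k : ℕ) : Measurable (bcVec x k) := by
  induction k with
  | zero => exact measurable_const
  | succ k ih =>
    exact (ih.div_const 2).add (measurable_pi_apply (k+1))

lemma bcVec_congr (x : ℝ) (k : ℕ) (v w : ℕ → ℝ) (h : ∀ i, i ≤ k → v i = w i) :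
    bcVec x k v = bcVec x k w := by
  induction k with
  | zero => rfl
  | succ k ih =>
    simp only [bcVec]
    rw [ih (fun i hi => h i (hi.trans (Nat.le_succ k))), h (k+1) le_rfl]

lemma bc_mean {Ω : Type*} [MeasurableSpace Ω] (μ : Measure Ω) [IsProbabilityMeasure μ]
    (θ : ℕ → Ω → ℝ) (hθmeas : ∀ n, Measurable (θ n))
    (hθindep : iIndepFun θ μ)
    (hθval : ∀ n ω, θ n ω = 1 ∨ θ n ω = -1)
    (hθ1 : ∀ n, μ {ω | θ n ω = 1} = 1/2)
    (x : ℝ) (hx : x ∈ Set.Ioo (-2 : ℝ) 2) (hx0 : x ≠ 0)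
    (X : ℕ → Ω → ℝ) (hX0 : ∀ ω, X 0 ω = x)
    (hX : ∀ k ω, X (k + 1) ω = X k ω / 2 + θ (k + 1) ω)
    (n : ℕ) (hn : 1 ≤ n) :
    (∫ t, t ∂(bcCondLaw μ X n) = x / 2) ∧ IsProbabilityMeasure (bcCondLaw μ X n) ∧
      (bcCondLaw μ X n) {t : ℝ | ¬ |t| ≤ 2} = 0 := by
  -- basic facts
  have hXfun : ∀ k, X (k+1) = fun ω => X k ω / 2 + θ (k+1) ω := fun k => funext (hX k)
  have hXmeas : ∀ k, Measurable (X k) := by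
    intro k
    induction k with
    | zero => simpa [funext hX0] using measurable_const (a := x)
    | succ k ih => rw [hXfun k]; exact (ih.div_const 2).add (hθmeas (k+1))
  have hθabs : ∀ k ω, |θ k ω| = 1 := by
    intro k ω; rcases hθval k ω with h | h <;> simp [h]
  have hXbd : ∀ k ω, |X k ω| < 2 := by
    intro k
    induction k with
    | zero => intro ω; rw [hX0]; rw [Set.mem_Ioo] at hx; exact abs_lt.2 ⟨hx.1, hx.2⟩
    | succ k ih =>
      intro ω
      calc |X (k+1) ω| ≤ |X k ω / 2| + |θ (k+1) ω| := by rw [hX]; exact abs_add_le _ _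
        _ < 2 := by rw [hθabs, abs_div]; have := ih ω; simp [abs_two]; linarith
  have hXbd' : ∀ k ω, |X k ω| ≤ 2 := fun k ω => (hXbd k ω).le
  -- pointwise: |X (k+1)| = θ(k+1) * X k / 2 + 1
  have habs_succ : ∀ k ω, |X (k+1) ω| = θ (k+1) ω * X k ω / 2 + 1 := by
    intro k ω
    have hb := abs_lt.1 (hXbd k ω)
    rcases hθval (k+1) ω with h | h
    · rw [hX, h]; rw [abs_of_nonneg (by linarith)]; ring
    · rw [hX, h]; rw [abs_of_nonpos (by linarith)]; ring
  -- |X(k+1)| * X(k+1) = θ(k+1) * (X k^2/4 + 1) + X k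
  have habsmul_succ : ∀ k ω,
      |X (k+1) ω| * X (k+1) ω = θ (k+1) ω * (X k ω ^ 2 / 4 + 1) + X k ω := by
    intro k ω
    have hsq : θ (k+1) ω * θ (k+1) ω = 1 := by rcases hθval (k+1) ω with h | h <;> simp [h]
    rcases hθval (k+1) ω with h | h <;> rw [habs_succ, hX, h] <;> ring
  -- W n = ∏_{k<n} |X k|
  set W : ℕ → Ω → ℝ := fun n ω => ∏ k ∈ Finset.range n, |X k ω| with hW
  have hWsucc : ∀ k ω, W (k+1) ω = W k ω * |X k ω| := by
    intro k ω; simp only [hW]; exact Finset.prod_range_succ _ _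
  have hWmeas : ∀ k, Measurable (W k) := by
    intro k; exact Finset.measurable_prod _ (fun i _ => (hXmeas i).abs)
  have hWnn : ∀ k ω, 0 ≤ W k ω := fun k ω => Finset.prod_nonneg (fun i _ => abs_nonneg _)
  have hWbd : ∀ k ω, W k ω ≤ 2 ^ k := by
    intro k ω
    calc W k ω ≤ ∏ _i ∈ Finset.range k, (2:ℝ) :=
          Finset.prod_le_prod (fun i _ => abs_nonneg _) (fun i _ => hXbd' i ω)
      _ = 2 ^ k := by simp
  -- integrability helper
  have hinteg : ∀ (f : Ω → ℝ) (C : ℝ), Measurable f → (∀ ω, |f ω| ≤ C) → Integrable f μ := by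
    intro f C hf hC
    exact (integrable_const C).mono' hf.aestronglyMeasurable
      (Filter.Eventually.of_forall (fun ω => by simpa [Real.norm_eq_abs] using hC ω))
  -- independence: (F (X n) * W n) is independent of θ (n+1)
  have hindep : ∀ (k : ℕ) (F : ℝ → ℝ), Measurable F →
      IndepFun (fun ω => F (X k ω) * W k ω) (θ (k+1)) μ := by
    intro k F hF
    have hrep : ∀ j ω, X j ω = bcVec x j (fun i => θ i ω) := by
      intro j
      induction j with
      | zero => intro ω; simp [bcVec, hX0]
      | succ j ih => intro ω; rw [hX, ih]; rfl
    set S : Finset ℕ := Finset.range (k+1) with hS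
    set T : Finset ℕ := {k+1} with hT
    have hdisj : Disjoint S T := by
      simp [hS, hT, Finset.disjoint_singleton_right]
    have hbase := hθindep.indepFun_finset S T hdisj hθmeas
    set ext : (S → ℝ) → ℕ → ℝ := fun v i => if h : i ∈ S then v ⟨i, h⟩ else 0 with hext
    have hextmeas : Measurable ext := by
      apply measurable_pi_lambda
      intro i
      by_cases h : i ∈ S
      · simpa [hext, h] using measurable_pi_apply (⟨i, h⟩ : S)
      · simpa [hext, h] using measurable_const
    set G : (S → ℝ) → ℝ := fun v =>
      F (bcVec x k (ext v)) * ∏ j ∈ Finset.range k, |bcVec x j (ext v)| with hG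
    have hGmeas : Measurable G :=
      ((hF.comp ((bcVec_measurable x k).comp hextmeas)).mul
        (Finset.measurable_prod _ (fun j _ =>
          ((bcVec_measurable x j).comp hextmeas).abs)))
    set H : (T → ℝ) → ℝ := fun v => v ⟨k+1, by simp [hT]⟩ with hH
    have hHmeas : Measurable H := measurable_pi_apply _
    have hcomp := hbase.comp hGmeas hHmeas
    have hgeq : (G ∘ fun ω (i : S) => θ i ω) = fun ω => F (X k ω) * W k ω := by
      funext ω
      have hagree : ∀ j, j ≤ k → bcVec x j (ext fun i : S => θ i ω) = X j ω := by
        intro j hj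
        rw [hrep j ω]
        apply bcVec_congr
        intro i hi
        have hiS : i ∈ S := by simp [hS]; omega
        simp [hext, hiS]
      simp only [Function.comp, hG, hW]
      rw [hagree k le_rfl]
      congr 1
      exact Finset.prod_congr rfl fun j hj => by
        rw [hagree j (Finset.mem_range.1 hj).le]
    have hheq : (H ∘ fun ω (i : T) => θ i ω) = θ (k+1) := by funext ω; rfl
    rw [hgeq, hheq] at hcomp
    exact hcomp
  -- mean of θ is 0
  have hEθ : ∀ k, ∫ ω, θ (k+1) ω ∂μ = 0 := by
    intro k
    set A : Set Ω := {ω | θ (k+1) ω = 1} with hA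
    have hAmeas : MeasurableSet A := (hθmeas (k+1)) (measurableSet_singleton 1)
    have hrepr : (fun ω => θ (k+1) ω) = fun ω => 2 * A.indicator (fun _ => (1:ℝ)) ω - 1 := by
      funext ω
      by_cases h : ω ∈ A
      · simp only [Set.indicator_of_mem h]
        have hh : θ (k+1) ω = 1 := h
        rw [hh]; ring
      · rw [Set.indicator_of_notMem h]
        rcases hθval (k+1) ω with h1 | h1
        · exact absurd h1 h
        · rw [h1]; ring
    rw [hrepr]
    rw [integral_sub ((integrable_const (1:ℝ)).indicator hAmeas |>.const_mul 2)
      (integrable_const 1)]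
    rw [integral_const_mul]
    have h1 : ∫ ω, A.indicator (fun _ => (1:ℝ)) ω ∂μ = (μ A).toReal := by
      rw [integral_indicator hAmeas]; simp; rfl
    have h2 : (μ A).toReal = 1/2 := by
      rw [hA, hθ1 (k+1)]
      simp [ENNReal.toReal_div]
    rw [h1, h2]
    simp
  -- integral of product with θ is zero
  have hprodzero : ∀ (k : ℕ) (F : ℝ → ℝ) (C : ℝ), Measurable F → (∀ t, |t| ≤ 2 → |F t| ≤ C) →
      ∫ ω, (F (X k ω) * W k ω) * θ (k+1) ω ∂μ = 0 := by
    intro k F C hF hFC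
    have hΦi : Integrable (fun ω => F (X k ω) * W k ω) μ := by
      apply hinteg _ (C * 2 ^ k) ((hF.comp (hXmeas k)).mul (hWmeas k))
      intro ω
      rw [Pi.mul_apply, Function.comp_apply, abs_mul]
      apply mul_le_mul (hFC _ (hXbd' k ω)) (by rw [abs_of_nonneg (hWnn k ω)]; exact hWbd k ω)
        (abs_nonneg _) ((abs_nonneg _).trans (hFC _ (hXbd' k ω)))
    have hθi : Integrable (θ (k+1)) μ := hinteg _ 1 (hθmeas (k+1)) (fun ω => (hθabs _ ω).le)
    have := IndepFun.integral_mul_eq_mul_integral (hindep k F hF) hΦi.aestronglyMeasurable hθi.aestronglyMeasurable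
    have heq : (fun ω => F (X k ω) * W k ω) * θ (k+1) = fun ω => (F (X k ω) * W k ω) * θ (k+1) ω := rfl
    rw [heq] at this
    rw [this, hEθ k, mul_zero]
  -- core moments induction
  have main : ∀ k, (∫ ω, |X k ω| * W k ω ∂μ = |x|) ∧
      (∫ ω, (|X k ω| * X k ω) * W k ω ∂μ = |x| * x) := by
    intro k
    induction k with
    | zero =>
      constructor
      · simp [hW, hX0]
      · simp [hW, hX0]
    | succ k ih =>
      have hF1 : Measurable (fun t : ℝ => |t| * t / 2) :=
        (measurable_id.abs.mul measurable_id).div_const 2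
      have hF2 : Measurable (fun t : ℝ => |t| * (t ^ 2 / 4 + 1)) :=
        measurable_id.abs.mul (((measurable_id.pow_const 2).div_const 4).add_const 1)
      have hB1 : ∀ t : ℝ, |t| ≤ 2 → |(|t| * t / 2)| ≤ 2 := by
        intro t ht
        have h0 := abs_nonneg t
        rw [abs_div, abs_mul, abs_abs, abs_two]
        nlinarith
      have hB2 : ∀ t : ℝ, |t| ≤ 2 → |(|t| * (t ^ 2 / 4 + 1))| ≤ 4 := by
        intro t ht
        have h0 := abs_nonneg t
        have hsq : t ^ 2 = |t| * |t| := by rw [abs_mul_abs_self]; ring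
        rw [abs_mul, abs_abs, abs_of_nonneg (by nlinarith : (0:ℝ) ≤ t ^ 2 / 4 + 1)]
        nlinarith
      have hz1 := hprodzero k (fun t => |t| * t / 2) 2 hF1 hB1
      have hz2 := hprodzero k (fun t => |t| * (t ^ 2 / 4 + 1)) 4 hF2 hB2
      have I2 : Integrable (fun ω => |X k ω| * W k ω) μ := by
        apply hinteg _ (2 * 2 ^ k) ((hXmeas k).abs.mul (hWmeas k))
        intro ω
        simp only [Pi.mul_apply]
        rw [abs_mul, abs_abs, abs_of_nonneg (hWnn k ω)]
        exact mul_le_mul (hXbd' k ω) (hWbd k ω) (hWnn k ω) (by norm_num)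
      have I2' : Integrable (fun ω => (|X k ω| * X k ω) * W k ω) μ := by
        apply hinteg _ (4 * 2 ^ k) (((hXmeas k).abs.mul (hXmeas k)).mul (hWmeas k))
        intro ω
        simp only [Pi.mul_apply]
        rw [abs_mul, abs_mul, abs_abs, abs_of_nonneg (hWnn k ω)]
        have h1 := hXbd' k ω
        have h2 := hWbd k ω
        have h3 := hWnn k ω
        have h4 := abs_nonneg (X k ω)
        have e1 : |X k ω| * |X k ω| ≤ 4 := by nlinarith
        exact mul_le_mul e1 h2 h3 (by norm_num)
      have I1 : Integrable (fun ω => |X k ω| * X k ω / 2 * W k ω * θ (k + 1) ω) μ := by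
        apply hinteg _ (2 * 2 ^ k)
          ((((hXmeas k).abs.mul (hXmeas k)).div_const 2 |>.mul (hWmeas k)).mul (hθmeas (k+1)))
        intro ω
        simp only [Pi.mul_apply]
        rw [abs_mul, hθabs, mul_one, abs_mul, abs_of_nonneg (hWnn k ω)]
        exact mul_le_mul (hB1 _ (hXbd' k ω)) (hWbd k ω) (hWnn k ω) (by norm_num)
      have I1' : Integrable (fun ω => |X k ω| * (X k ω ^ 2 / 4 + 1) * W k ω * θ (k + 1) ω) μ := by
        apply hinteg _ (4 * 2 ^ k)
          (((hXmeas k).abs.mul (((hXmeas k).pow_const 2).div_const 4 |>.add_const 1)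
            |>.mul (hWmeas k)).mul (hθmeas (k+1)))
        intro ω
        simp only [Pi.mul_apply]
        rw [abs_mul, hθabs, mul_one, abs_mul, abs_of_nonneg (hWnn k ω)]
        exact mul_le_mul (hB2 _ (hXbd' k ω)) (hWbd k ω) (hWnn k ω) (by norm_num)
      constructor
      · have e1 : (fun ω => |X (k+1) ω| * W (k+1) ω)
            = fun ω => |X k ω| * X k ω / 2 * W k ω * θ (k + 1) ω + |X k ω| * W k ω := by
          funext ω
          rw [hWsucc, habs_succ]
          ring
        rw [e1, integral_add I1 I2, hz1, ih.1, zero_add]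
      · have e2 : (fun ω => (|X (k+1) ω| * X (k+1) ω) * W (k+1) ω)
            = fun ω => |X k ω| * (X k ω ^ 2 / 4 + 1) * W k ω * θ (k + 1) ω
                + (|X k ω| * X k ω) * W k ω := by
          funext ω
          rw [hWsucc, habsmul_succ]
          ring
        rw [e2, integral_add I1' I2', hz2, ih.2, zero_add]
  -- moments at time n ≥ 1
  obtain ⟨m, rfl⟩ : ∃ m, n = m + 1 := ⟨n - 1, by omega⟩
  have ha : ∫ ω, W (m+1) ω ∂μ = |x| := by
    have e : (fun ω => W (m+1) ω) = fun ω => |X m ω| * W m ω := by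
      funext ω; rw [hWsucc]; ring
    rw [e]; exact (main m).1
  have hb : ∫ ω, W (m+1) ω * X (m+1) ω ∂μ = |x| * x / 2 := by
    have hzabs := hprodzero m (fun t => |t|) 2 measurable_id.abs (fun t ht => by rwa [abs_abs])
    have Iabs : Integrable (fun ω => |X m ω| * W m ω * θ (m+1) ω) μ := by
      apply hinteg _ (2 * 2 ^ m) (((hXmeas m).abs.mul (hWmeas m)).mul (hθmeas (m+1)))
      intro ω
      simp only [Pi.mul_apply]
      rw [abs_mul, hθabs, mul_one, abs_mul, abs_abs, abs_of_nonneg (hWnn m ω)]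
      exact mul_le_mul (hXbd' m ω) (hWbd m ω) (hWnn m ω) (by norm_num)
    have Ihalf : Integrable (fun ω => (|X m ω| * X m ω) * W m ω / 2) μ := by
      apply hinteg _ (4 * 2 ^ m)
        ((((hXmeas m).abs.mul (hXmeas m)).mul (hWmeas m)).div_const 2)
      intro ω
      simp only [Pi.mul_apply]
      rw [abs_div, abs_two, abs_mul, abs_mul, abs_abs, abs_of_nonneg (hWnn m ω)]
      have h1 := hXbd' m ω
      have h2 := hWbd m ω
      have h3 := hWnn m ω
      have h4 := abs_nonneg (X m ω)
      have e1 : |X m ω| * |X m ω| ≤ 4 := by nlinarith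
      have h5 : |X m ω| * |X m ω| * W m ω ≤ 4 * 2 ^ m := mul_le_mul e1 h2 h3 (by norm_num)
      have h6 : 0 ≤ |X m ω| * |X m ω| * W m ω := mul_nonneg (mul_nonneg h4 h4) h3
      linarith
    have e : (fun ω => W (m+1) ω * X (m+1) ω)
        = fun ω => (|X m ω| * X m ω) * W m ω / 2 + |X m ω| * W m ω * θ (m+1) ω := by
      funext ω
      rw [hWsucc, hX]
      ring
    rw [e, integral_add Ihalf Iabs, hzabs, add_zero, integral_div, (main m).2]
  -- translate to bcPenalty
  have hpen : ∀ ω, bcPenalty X (m+1) ω = W (m+1) ω / 2 ^ (m+1) := by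
    intro ω
    simp only [bcPenalty, hW, Finset.prod_div_distrib, Finset.prod_const, Finset.card_range]
  have hpow : (0:ℝ) < 2 ^ (m+1) := by positivity
  have hpennn : ∀ ω, 0 ≤ bcPenalty X (m+1) ω := by
    intro ω; rw [hpen]; exact div_nonneg (hWnn _ ω) hpow.le
  have hpenmeas : Measurable (bcPenalty X (m+1)) := by
    have : bcPenalty X (m+1) = fun ω => W (m+1) ω / 2 ^ (m+1) := funext hpen
    rw [this]; exact (hWmeas _).div_const _
  have hpeni : Integrable (bcPenalty X (m+1)) μ := by
    apply hinteg _ 1 hpenmeas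
    intro ω
    rw [hpen, abs_div, abs_of_nonneg (hWnn _ ω), abs_of_pos hpow, div_le_one hpow]
    exact hWbd _ ω
  have hpenint : ∫ ω, bcPenalty X (m+1) ω ∂μ = |x| / 2 ^ (m+1) := by
    have e : (fun ω => bcPenalty X (m+1) ω) = fun ω => W (m+1) ω / 2 ^ (m+1) := funext hpen
    rw [e, integral_div, ha]
  have hpenXint : ∫ ω, bcPenalty X (m+1) ω * X (m+1) ω ∂μ = |x| * x / 2 / 2 ^ (m+1) := by
    have e : (fun ω => bcPenalty X (m+1) ω * X (m+1) ω)
        = fun ω => W (m+1) ω * X (m+1) ω / 2 ^ (m+1) := by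
      funext ω; rw [hpen]; ring
    rw [e, integral_div, hb]
  have hLval : (∫⁻ ω, ENNReal.ofReal (bcPenalty X (m+1) ω) ∂μ)
      = ENNReal.ofReal (|x| / 2 ^ (m+1)) := by
    rw [← ofReal_integral_eq_lintegral_ofReal hpeni
      (Filter.Eventually.of_forall hpennn), hpenint]
  have hxabs : (0:ℝ) < |x| := abs_pos.2 hx0
  have hL0 : ENNReal.ofReal (|x| / 2 ^ (m+1)) ≠ 0 := by
    simp only [ne_eq, ENNReal.ofReal_eq_zero, not_le]
    positivity
  have hLtop : ENNReal.ofReal (|x| / 2 ^ (m+1)) ≠ ⊤ := ENNReal.ofReal_ne_top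
  refine ⟨?_, ?_, ?_⟩
  · -- mean
    have emap : ∫ t, t ∂(bcCondLaw μ X (m+1)) =
        ∫ ω, X (m+1) ω ∂((∫⁻ ω, ENNReal.ofReal (bcPenalty X (m+1) ω) ∂μ)⁻¹ •
          μ.withDensity (fun ω => ENNReal.ofReal (bcPenalty X (m+1) ω))) := by
      rw [bcCondLaw]
      exact integral_map (hXmeas (m+1)).aemeasurable aestronglyMeasurable_id
    rw [emap, hLval, integral_smul_measure]
    have hden : (fun ω => ENNReal.ofReal (bcPenalty X (m+1) ω))
        = fun ω => ((Real.toNNReal (bcPenalty X (m+1) ω) : NNReal) : ENNReal) := by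
      funext ω; rfl
    rw [hden, integral_withDensity_eq_integral_smul hpenmeas.real_toNNReal]
    have e : (fun ω => Real.toNNReal (bcPenalty X (m+1) ω) • X (m+1) ω)
        = fun ω => bcPenalty X (m+1) ω * X (m+1) ω := by
      funext ω
      rw [NNReal.smul_def, smul_eq_mul, Real.coe_toNNReal _ (hpennn ω)]
    rw [e, hpenXint]
    rw [← ENNReal.ofReal_inv_of_pos (by positivity), ENNReal.toReal_ofReal (by positivity)]
    rw [smul_eq_mul]
    field_simp
  · -- probability measure
    constructor
    rw [bcCondLaw, Measure.map_apply (hXmeas (m+1)) MeasurableSet.univ, Set.preimage_univ]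
    rw [Measure.smul_apply, withDensity_apply _ MeasurableSet.univ, Measure.restrict_univ]
    rw [smul_eq_mul, hLval, ENNReal.inv_mul_cancel hL0 hLtop]
  · -- support
    have hms : MeasurableSet {t : ℝ | ¬ |t| ≤ 2} :=
      (measurableSet_le measurable_abs measurable_const).compl
    rw [bcCondLaw, Measure.map_apply (hXmeas (m+1)) hms]
    have : X (m+1) ⁻¹' {t : ℝ | ¬ |t| ≤ 2} = ∅ := by
      ext ω
      simp only [Set.mem_preimage, Set.mem_setOf_eq, Set.mem_empty_iff_false, iff_false,
        not_not]
      exact hXbd' (m+1) ω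
    rw [this]
    simp

/-- For the Bernoulli convolution on `E = (-2,2) \ {0}` penalized by `p(x) = |x|/2`, the
`L¹`-Wasserstein distance between the conditional laws started from `x` and from `y` is at
least `|x-y|/2`: every coupling `π` of the two conditional laws has transport cost at least
`|x-y|/2`. -/
theorem bernoulli_convolution_wasserstein_lower_bound
    {Ω : Type*} [MeasurableSpace Ω] (μ : Measure Ω) [IsProbabilityMeasure μ]
    (θ : ℕ → Ω → ℝ) (hθmeas : ∀ n, Measurable (θ n))
    (hθindep : iIndepFun θ μ)
    (hθval : ∀ n ω, θ n ω = 1 ∨ θ n ω = -1)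
    (hθ1 : ∀ n, μ {ω | θ n ω = 1} = 1/2)
    (x y : ℝ) (hx : x ∈ Set.Ioo (-2 : ℝ) 2) (hx0 : x ≠ 0)
    (hy : y ∈ Set.Ioo (-2 : ℝ) 2) (hy0 : y ≠ 0)
    (X Y : ℕ → Ω → ℝ) (hX0 : ∀ ω, X 0 ω = x) (hY0 : ∀ ω, Y 0 ω = y)
    (hX : ∀ k ω, X (k + 1) ω = X k ω / 2 + θ (k + 1) ω)
    (hY : ∀ k ω, Y (k + 1) ω = Y k ω / 2 + θ (k + 1) ω) :
    ∀ n : ℕ, 1 ≤ n → ∀ π : Measure (ℝ × ℝ), IsProbabilityMeasure π →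
      π.fst = bcCondLaw μ X n → π.snd = bcCondLaw μ Y n →
      |x - y| / 2 ≤ ∫ p, |p.1 - p.2| ∂π := by
  intro n hn π hπ hfst hsnd
  obtain ⟨hmX, hprobX, hsuppX⟩ := bc_mean μ θ hθmeas hθindep hθval hθ1 x hx hx0 X hX0 hX n hn
  obtain ⟨hmY, hprobY, hsuppY⟩ := bc_mean μ θ hθmeas hθindep hθval hθ1 y hy hy0 Y hY0 hY n hn
  have hms : MeasurableSet {t : ℝ | ¬ |t| ≤ 2} :=
    (measurableSet_le measurable_abs measurable_const).compl
  have hae1 : ∀ᵐ p ∂π, |p.1| ≤ 2 := by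
    rw [ae_iff]
    have : {p : ℝ × ℝ | ¬ |p.1| ≤ 2} = Prod.fst ⁻¹' {t : ℝ | ¬ |t| ≤ 2} := rfl
    rw [this, ← Measure.fst_apply hms, hfst]
    exact hsuppX
  have hae2 : ∀ᵐ p ∂π, |p.2| ≤ 2 := by
    rw [ae_iff]
    have : {p : ℝ × ℝ | ¬ |p.2| ≤ 2} = Prod.snd ⁻¹' {t : ℝ | ¬ |t| ≤ 2} := rfl
    rw [this, ← Measure.snd_apply hms, hsnd]
    exact hsuppY
  have hi1 : Integrable (fun p : ℝ × ℝ => p.1) π := by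
    refine (integrable_const (2:ℝ)).mono' measurable_fst.aestronglyMeasurable ?_
    filter_upwards [hae1] with p hp
    simpa [Real.norm_eq_abs] using hp
  have hi2 : Integrable (fun p : ℝ × ℝ => p.2) π := by
    refine (integrable_const (2:ℝ)).mono' measurable_snd.aestronglyMeasurable ?_
    filter_upwards [hae2] with p hp
    simpa [Real.norm_eq_abs] using hp
  have hI1 : ∫ p, p.1 ∂π = x / 2 := by
    have e : ∫ t, t ∂(π.fst) = ∫ p, p.1 ∂π := by
      rw [Measure.fst]
      exact integral_map measurable_fst.aemeasurable aestronglyMeasurable_id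
    rw [← e, hfst]
    exact hmX
  have hI2 : ∫ p, p.2 ∂π = y / 2 := by
    have e : ∫ t, t ∂(π.snd) = ∫ p, p.2 ∂π := by
      rw [Measure.snd]
      exact integral_map measurable_snd.aemeasurable aestronglyMeasurable_id
    rw [← e, hsnd]
    exact hmY
  have hkey : ∫ p, p.1 - p.2 ∂π = (x - y) / 2 := by
    rw [integral_sub hi1 hi2, hI1, hI2]
    ring
  calc |x - y| / 2 = |∫ p, p.1 - p.2 ∂π| := by rw [hkey, abs_div, abs_two]
    _ ≤ ∫ p, |p.1 - p.2| ∂π := by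
        simpa [Real.norm_eq_abs] using
          norm_integral_le_integral_norm (μ := π) (fun p : ℝ × ℝ => p.1 - p.2)
end

section
/- Let (E,d) be a metric space with d bounded by d̄, and ρ : E → ℝ₊ a d-Lipschitz function. In discrete time, suppose there is a coupling such that d(X_n, Y_n) ≤ C₀ e^{−γ n} d(x,y) almost surely for all n, with C₀ > 0, γ > 0. Set p = e^{−ρ}, Z_n^X = p(X₀)⋯p(X_{n−1}), Z_n^Y = p(Y₀)⋯p(Y_{n−1}), and C_B = (C₀ e^{osc(ρ)} ‖ρ‖_{Lip} / (1 − e^{−γ})) · exp(C₀ e^{osc(ρ)} ‖ρ‖_{Lip} d̄ / (1 − e^{−γ})). Then almost surely, for all n ≥ 1, |Z_n^X − Z_n^Y| ≤ C_B d(x,y) (Z_n^X ∧ Z_n^Y). -/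
open Finset

/-- Elementary bound `|e^t - 1| ≤ |t| e^{|t|}`. -/
lemma abs_exp_sub_one_le' (t : ℝ) : |Real.exp t - 1| ≤ |t| * Real.exp |t| := by
  rcases le_total 0 t with ht | ht
  · rw [abs_of_nonneg ht, abs_of_nonneg (by linarith [Real.one_le_exp ht] : (0:ℝ) ≤ Real.exp t - 1)]
    have h1 := Real.add_one_le_exp (-t)
    have h2 : Real.exp t * (-t + 1) ≤ Real.exp t * Real.exp (-t) :=
      mul_le_mul_of_nonneg_left h1 (Real.exp_pos t).le
    rw [← Real.exp_add, add_neg_cancel, Real.exp_zero] at h2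
    nlinarith
  · rw [abs_of_nonpos ht, abs_of_nonpos (by
      have := Real.exp_le_one_iff.mpr ht; linarith : Real.exp t - 1 ≤ 0)]
    have h1 := Real.add_one_le_exp t
    have h2 : (1:ℝ) ≤ Real.exp (-t) := Real.one_le_exp (by linarith)
    nlinarith

/-- Product comparison: if `|u k - v k| ≤ a k * v k` termwise then
`|∏ u - ∏ v| ≤ (∏ (1 + a) - 1) * ∏ v`. -/
lemma prod_abs_sub_le (u v a : ℕ → ℝ) (hu : ∀ k, 0 ≤ u k) (hv : ∀ k, 0 ≤ v k)
    (ha : ∀ k, 0 ≤ a k) (hstep : ∀ k, |u k - v k| ≤ a k * v k) (n : ℕ) :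
    |(∏ k ∈ range n, u k) - ∏ k ∈ range n, v k| ≤
      ((∏ k ∈ range n, (1 + a k)) - 1) * ∏ k ∈ range n, v k := by
  induction n with
  | zero => simp
  | succ n ih =>
    rw [prod_range_succ, prod_range_succ, prod_range_succ]
    set U := ∏ k ∈ range n, u k with hU
    set V := ∏ k ∈ range n, v k with hV
    set Q := ∏ k ∈ range n, (1 + a k) with hQ
    have hVn : 0 ≤ V := prod_nonneg fun k _ => hv k
    have hQ1 : 1 ≤ Q := by
      rw [hQ]
      calc (1:ℝ) = ∏ _k ∈ range n, (1:ℝ) := by simp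
        _ ≤ ∏ k ∈ range n, (1 + a k) :=
          Finset.prod_le_prod (fun k _ => zero_le_one) (fun k _ => by linarith [ha k])
    have h1 : |U * u n - V * v n| ≤ u n * |U - V| + |u n - v n| * V := by
      have heq : U * u n - V * v n = u n * (U - V) + (u n - v n) * V := by ring
      rw [heq]
      refine (abs_add_le _ _).trans ?_
      rw [abs_mul, abs_mul, abs_of_nonneg (hu n), abs_of_nonneg hVn]
    have hun : u n ≤ (1 + a n) * v n := by
      have := (abs_le.1 (hstep n)).2; linarith
    have h2 : u n * |U - V| ≤ ((1 + a n) * v n) * ((Q - 1) * V) :=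
      mul_le_mul hun ih (abs_nonneg _) (mul_nonneg (by linarith [ha n]) (hv n))
    have h3 : |u n - v n| * V ≤ (a n * v n) * V :=
      mul_le_mul_of_nonneg_right (hstep n) hVn
    have : |U * u n - V * v n| ≤ (Q * (1 + a n) - 1) * (V * v n) := by
      have hvn := hv n
      nlinarith
    exact this

/-- Under almost sure exponential contraction of the coupled trajectories, the discrete-time
penalties `Z_n^X = p(X₀)⋯p(X_{n-1})` with `p = e^{-ρ}` satisfy
`|Z_n^X - Z_n^Y| ≤ C_B d(x,y) (Z_n^X ∧ Z_n^Y)` with the explicit constant `C_B`. -/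
theorem penalty_comparison_of_as_contraction
    {E : Type*} [MetricSpace E] (dbar : ℝ) (hdbar : ∀ x y : E, dist x y ≤ dbar)
    (ρ : E → ℝ) (hρpos : ∀ z, 0 ≤ ρ z)
    (L : ℝ) (hL : ∀ z w : E, |ρ z - ρ w| ≤ L * dist z w)
    (oscρ : ℝ) (hosc : ∀ z w : E, ρ z - ρ w ≤ oscρ)
    (C₀ γ : ℝ) (hC₀ : 0 < C₀) (hγ : 0 < γ)
    (x y : E) (X Y : ℕ → E) (hX0 : X 0 = x) (hY0 : Y 0 = y)
    (hcontr : ∀ n : ℕ, dist (X n) (Y n) ≤ C₀ * Real.exp (-γ * n) * dist x y) :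
    ∀ n : ℕ, 1 ≤ n →
      |(∏ k ∈ Finset.range n, Real.exp (-ρ (X k))) -
          ∏ k ∈ Finset.range n, Real.exp (-ρ (Y k))| ≤
        (C₀ * Real.exp oscρ * L / (1 - Real.exp (-γ)) *
            Real.exp (C₀ * Real.exp oscρ * L * dbar / (1 - Real.exp (-γ)))) *
          dist x y *
          min (∏ k ∈ Finset.range n, Real.exp (-ρ (X k)))
            (∏ k ∈ Finset.range n, Real.exp (-ρ (Y k))) := by
  intro n _
  by_cases hxy : dist x y = 0
  · have hXY : ∀ k, X k = Y k := by
      intro k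
      have h := hcontr k
      rw [hxy, mul_zero] at h
      exact dist_le_zero.mp h
    simp only [hXY, hxy, sub_self, abs_zero, mul_zero, zero_mul]
    positivity
  · -- preliminaries
    have hD : 0 < dist x y := lt_of_le_of_ne dist_nonneg (Ne.symm hxy)
    have hL0 : 0 ≤ L := by nlinarith [hL x y, abs_nonneg (ρ x - ρ y)]
    have hosc0 : 0 ≤ oscρ := by have := hosc x x; linarith
    set r := Real.exp (-γ) with hr
    have hr0 : 0 < r := Real.exp_pos _
    have hr1 : r < 1 := Real.exp_lt_one_iff.mpr (by linarith)
    have h1r : 0 < 1 - r := by linarith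
    set c := C₀ * Real.exp oscρ * L with hc
    have hc0 : 0 ≤ c := by positivity
    set a : ℕ → ℝ := fun k => c * r ^ k * dist x y with ha
    have ha0 : ∀ k, 0 ≤ a k := fun k => by positivity
    -- pointwise estimate (both directions)
    have key : ∀ z w : E, ∀ k : ℕ, dist z w ≤ C₀ * Real.exp (-γ * k) * dist x y →
        |Real.exp (-ρ z) - Real.exp (-ρ w)| ≤ a k * Real.exp (-ρ w) := by
      intro z w k hd
      set t := ρ w - ρ z with ht
      have htabs : |t| ≤ L * dist z w := by
        have := hL w z; rwa [dist_comm w z] at this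
      have htosc : |t| ≤ oscρ := by
        rw [abs_le]; constructor
        · have := hosc z w; linarith
        · exact hosc w z
      have heq : Real.exp (-ρ z) - Real.exp (-ρ w)
          = (Real.exp t - 1) * Real.exp (-ρ w) := by
        rw [sub_mul, one_mul, ← Real.exp_add]; ring_nf; rw [ht]; ring_nf
      rw [heq, abs_mul, abs_of_nonneg (Real.exp_pos (-ρ w)).le]
      have h1 : |Real.exp t - 1| ≤ (L * dist z w) * Real.exp oscρ := by
        refine (abs_exp_sub_one_le' t).trans ?_
        exact mul_le_mul htabs (Real.exp_le_exp.mpr htosc) (Real.exp_pos _).le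
          ((abs_nonneg t).trans htabs)
      have h2 : (L * dist z w) * Real.exp oscρ ≤ a k := by
        have hrk : Real.exp (-γ * k) = r ^ k := by
          rw [hr, ← Real.exp_nat_mul, mul_comm]
        have hld : L * dist z w ≤ L * (C₀ * (r ^ k) * dist x y) := by
          rw [← hrk]; exact mul_le_mul_of_nonneg_left hd hL0
        show L * dist z w * Real.exp oscρ ≤ c * r ^ k * dist x y
        calc L * dist z w * Real.exp oscρ
            ≤ L * (C₀ * (r ^ k) * dist x y) * Real.exp oscρ :=
              mul_le_mul_of_nonneg_right hld (Real.exp_pos oscρ).le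
          _ = c * r ^ k * dist x y := by rw [hc]; ring
      have := mul_le_mul_of_nonneg_right (h1.trans h2) (Real.exp_pos (-ρ w)).le
      linarith
    have hstepXY : ∀ k, |Real.exp (-ρ (X k)) - Real.exp (-ρ (Y k))|
        ≤ a k * Real.exp (-ρ (Y k)) := fun k => key _ _ k (hcontr k)
    have hstepYX : ∀ k, |Real.exp (-ρ (Y k)) - Real.exp (-ρ (X k))|
        ≤ a k * Real.exp (-ρ (X k)) := fun k => key _ _ k (by
          rw [dist_comm]; exact hcontr k)
    set ZX := ∏ k ∈ range n, Real.exp (-ρ (X k)) with hZX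
    set ZY := ∏ k ∈ range n, Real.exp (-ρ (Y k)) with hZY
    set P := ∏ k ∈ range n, (1 + a k) with hP
    have hZXpos : 0 < ZX := prod_pos fun k _ => Real.exp_pos _
    have hZYpos : 0 < ZY := prod_pos fun k _ => Real.exp_pos _
    have hP1 : 1 ≤ P := by
      rw [hP]
      calc (1:ℝ) = ∏ _k ∈ range n, (1:ℝ) := by simp
        _ ≤ ∏ k ∈ range n, (1 + a k) :=
          Finset.prod_le_prod (fun k _ => zero_le_one) (fun k _ => by linarith [ha0 k])
    have hbX : |ZX - ZY| ≤ (P - 1) * ZY :=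
      prod_abs_sub_le _ _ a (fun k => (Real.exp_pos _).le) (fun k => (Real.exp_pos _).le)
        ha0 hstepXY n
    have hbY : |ZX - ZY| ≤ (P - 1) * ZX := by
      rw [abs_sub_comm]
      exact prod_abs_sub_le _ _ a (fun k => (Real.exp_pos _).le) (fun k => (Real.exp_pos _).le)
        ha0 hstepYX n
    have hbmin : |ZX - ZY| ≤ (P - 1) * min ZX ZY := by
      rcases min_cases ZX ZY with ⟨h, _⟩ | ⟨h, _⟩
      · rw [h]; exact hbY
      · rw [h]; exact hbX
    -- sum bound
    set S := ∑ k ∈ range n, a k with hS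
    have hS0 : 0 ≤ S := sum_nonneg fun k _ => ha0 k
    have hgeom : ∑ k ∈ range n, r ^ k ≤ 1 / (1 - r) := by
      rw [geom_sum_eq (ne_of_lt hr1),
        show (r ^ n - 1) / (r - 1) = (1 - r ^ n) / (1 - r) by
          rw [← neg_div_neg_eq]; ring_nf]
      gcongr
      nlinarith [pow_nonneg hr0.le n]
    have hSle : S ≤ c * dist x y / (1 - r) := by
      have : S = c * dist x y * ∑ k ∈ range n, r ^ k := by
        rw [hS, mul_sum]; exact Finset.sum_congr rfl fun k _ => by rw [ha]; ring
      rw [this, div_eq_mul_one_div]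
      exact mul_le_mul_of_nonneg_left hgeom (by positivity)
    have hPS : P ≤ Real.exp S := by
      rw [hS, Real.exp_sum]
      exact prod_le_prod (fun k _ => by linarith [ha0 k])
        (fun k _ => by linarith [Real.add_one_le_exp (a k)])
    have hexpS : Real.exp S - 1 ≤ S * Real.exp S := by
      have h1 := Real.add_one_le_exp (-S)
      have h2 : Real.exp S * (-S + 1) ≤ Real.exp S * Real.exp (-S) :=
        mul_le_mul_of_nonneg_left h1 (Real.exp_pos S).le
      rw [← Real.exp_add, add_neg_cancel, Real.exp_zero] at h2
      nlinarith
    have hddbar : dist x y ≤ dbar := hdbar x y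
    have hfin : S * Real.exp S ≤
        (c / (1 - r) * Real.exp (c * dbar / (1 - r))) * dist x y := by
      have hSle2 : S ≤ c * dbar / (1 - r) := by
        refine hSle.trans ?_
        gcongr
      have := mul_le_mul hSle (Real.exp_le_exp.mpr hSle2) (Real.exp_pos S).le
        (by positivity : (0:ℝ) ≤ c * dist x y / (1 - r))
      calc S * Real.exp S ≤ (c * dist x y / (1 - r)) * Real.exp (c * dbar / (1 - r)) := this
        _ = (c / (1 - r) * Real.exp (c * dbar / (1 - r))) * dist x y := by ring
    have hminpos : 0 ≤ min ZX ZY := le_min hZXpos.le hZYpos.le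
    calc |ZX - ZY| ≤ (P - 1) * min ZX ZY := hbmin
      _ ≤ (S * Real.exp S) * min ZX ZY := by
          refine mul_le_mul_of_nonneg_right ?_ hminpos
          linarith
      _ ≤ ((c / (1 - r) * Real.exp (c * dbar / (1 - r))) * dist x y) * min ZX ZY :=
          mul_le_mul_of_nonneg_right hfin hminpos
end
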